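/- Strong soundness and completeness of LP→⊥: for every set Γ of formulas of LP→⊥ and every formula A of LP→⊥, Γ ⊢ A (A is derivable from Γ in the Hilbert system of LP→⊥) if and only if Γ ⊨ A (semantic logical consequence in the three-valued semantics of LP→⊥). -/

import Mathlib

set_option autoImplicit true
set_option maxHeartbeats 1000000

/-- The three truth values of LP→⊥: true, false, both. -/
inductive V3 : Type
  | t
  | f
  | b
  deriving DecidableEq

/-- Formulas of LP→⊥ over propositional variables of type `α`. -/
inductive Fml (α : Type) : Type
  | var : α → Fml α
  | bot : Fml α
  | neg : Fml α → Fml α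
  | conj : Fml α → Fml α → Fml α
  | disj : Fml α → Fml α → Fml α
  | imp : Fml α → Fml α → Fml α

namespace Fml

/-- ⊤ abbreviates ¬⊥. -/
def top {α : Type} : Fml α := neg bot

/-- A↔B abbreviates (A→B)∧(B→A). -/
def iff' {α : Type} (A B : Fml α) : Fml α := conj (imp A B) (imp B A)

end Fml

/-- LP→⊥ truth table for negation. -/
def negT : V3 → V3
  | .f => .t
  | .t => .f
  | .b => .b

/-- LP→⊥ truth table for conjunction. -/
def conjT : V3 → V3 → V3
  | .f, _ => .f
  | _, .f => .f
  | .t, .t => .t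
  | _, _ => .b

/-- LP→⊥ truth table for disjunction. -/
def disjT : V3 → V3 → V3
  | .t, _ => .t
  | _, .t => .t
  | .f, .f => .f
  | _, _ => .b

/-- LP→⊥ truth table for implication. -/
def impT : V3 → V3 → V3
  | .f, _ => .t
  | _, y => y

/-- The LP→⊥ valuation determined by an assignment `σ` of truth values to variables. -/
def eval {α : Type} (σ : α → V3) : Fml α → V3
  | .var x => σ x
  | .bot => .f
  | .neg A => negT (eval σ A)
  | .conj A B => conjT (eval σ A) (eval σ B)
  | .disj A B => disjT (eval σ A) (eval σ B)
  | .imp A B => impT (eval σ A) (eval σ B)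

/-- Logical equivalence in LP→⊥: the same value under every valuation. -/
def FEquiv {α : Type} (A B : Fml α) : Prop := ∀ σ : α → V3, eval σ A = eval σ B

/-- `φ ∈ [⊥]`: `φ` is logically equivalent to ⊥. -/
def EqBot {α : Type} (φ : Fml α) : Prop := ∀ σ : α → V3, eval σ φ = V3.f

/-- Semantic consequence in LP→⊥ (designated values t and b). -/
def SemCons {α : Type} (Γ : Set (Fml α)) (A : Fml α) : Prop :=
  ∀ σ : α → V3, (∀ C ∈ Γ, eval σ C ≠ V3.f) → eval σ A ≠ V3.f

/-- The Hilbert system of LP→⊥, with hypotheses `Γ`. -/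
inductive Hilb {α : Type} (Γ : Set (Fml α)) : Fml α → Prop
  | hyp {A : Fml α} : A ∈ Γ → Hilb Γ A
  | mp {A B : Fml α} : Hilb Γ (A.imp B) → Hilb Γ A → Hilb Γ B
  | ax1 (A B : Fml α) : Hilb Γ (A.imp (B.imp A))
  | ax2 (A B C : Fml α) : Hilb Γ ((A.imp (B.imp C)).imp ((A.imp B).imp (A.imp C)))
  | ax3 (A B : Fml α) : Hilb Γ (((A.imp B).imp A).imp A)
  | ax4 (A : Fml α) : Hilb Γ (Fml.bot.imp A)
  | ax5 (A B : Fml α) : Hilb Γ ((A.conj B).imp A)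
  | ax6 (A B : Fml α) : Hilb Γ ((A.conj B).imp B)
  | ax7 (A B : Fml α) : Hilb Γ (A.imp (B.imp (A.conj B)))
  | ax8 (A B : Fml α) : Hilb Γ (A.imp (A.disj B))
  | ax9 (A B : Fml α) : Hilb Γ (B.imp (A.disj B))
  | ax10 (A B C : Fml α) : Hilb Γ ((A.imp C).imp ((B.imp C).imp ((A.disj B).imp C)))
  | ax11 (A : Fml α) : Hilb Γ (Fml.iff' A.neg.neg A)
  | ax12 (A B : Fml α) : Hilb Γ (Fml.iff' (A.imp B).neg (A.conj B.neg))
  | ax13 (A B : Fml α) : Hilb Γ (Fml.iff' (A.conj B).neg (A.neg.disj B.neg))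
  | ax14 (A B : Fml α) : Hilb Γ (Fml.iff' (A.disj B).neg (A.neg.conj B.neg))
  | ax15 (A : Fml α) : Hilb Γ (A.disj A.neg)

/-- The internalization (A↔B)∧(¬A↔¬B) of logical equivalence. -/
def InternEq {α : Type} (φ ψ : Fml α) : Fml α :=
  (Fml.iff' φ ψ).conj (Fml.iff' φ.neg ψ.neg)

/-!
Soundness is a truth-table check of each axiom schema together with the fact that modus
ponens preserves the designated values `t` and `b`.

For completeness, if `Γ ⊬ A`, Zorn's lemma (with compactness of derivations) extends `Γ` to a
maximal `Δ ⊬ A`. Such a `Δ` is deductively closed and prime, contains `B ∨ ¬B` and hence `B` or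
`¬B`, and Peirce's law makes implication classical on it: `B → C ∈ Δ` iff `B ∈ Δ` implies `C ∈ Δ`.
Reading `C ∈ Δ` as "`C` is not false" and `¬C ∈ Δ` as "`C` is not true" defines a
three-valued valuation under which `A` is false while every member of `Γ` is designated.
-/

namespace Hilb

variable {α : Type} {Γ Δ : Set (Fml α)} {A B C : Fml α}

theorem induction_on_axioms {P : Fml α → Prop} (hyp : ∀ A ∈ Γ, P A)
    (ax : ∀ A, (∀ Δ : Set (Fml α), Hilb Δ A) → P A)
    (mp : ∀ {A B}, P (A.imp B) → P A → P B) (h : Hilb Γ A) : P A := by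
  induction h with
  | hyp hA => exact hyp _ hA
  | mp _ _ ihAB ihA => exact mp ihAB ihA
  | ax1 A B => exact ax _ fun _ => .ax1 A B
  | ax2 A B C => exact ax _ fun _ => .ax2 A B C
  | ax3 A B => exact ax _ fun _ => .ax3 A B
  | ax4 A => exact ax _ fun _ => .ax4 A
  | ax5 A B => exact ax _ fun _ => .ax5 A B
  | ax6 A B => exact ax _ fun _ => .ax6 A B
  | ax7 A B => exact ax _ fun _ => .ax7 A B
  | ax8 A B => exact ax _ fun _ => .ax8 A B
  | ax9 A B => exact ax _ fun _ => .ax9 A B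
  | ax10 A B C => exact ax _ fun _ => .ax10 A B C
  | ax11 A => exact ax _ fun _ => .ax11 A
  | ax12 A B => exact ax _ fun _ => .ax12 A B
  | ax13 A B => exact ax _ fun _ => .ax13 A B
  | ax14 A B => exact ax _ fun _ => .ax14 A B
  | ax15 A => exact ax _ fun _ => .ax15 A

theorem mono (hΓΔ : Γ ⊆ Δ) (h : Hilb Γ A) : Hilb Δ A :=
  h.induction_on_axioms (fun _ hA => .hyp (hΓΔ hA)) (fun _ hA => hA Δ) .mp

theorem insert_of_hilb (h : Hilb Γ A) : Hilb (insert B Γ) A :=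
  h.mono (Set.subset_insert B Γ)

theorem insert_self : Hilb (insert A Γ) A :=
  .hyp (Set.mem_insert A Γ)

theorem imp_of_hilb (h : Hilb Γ A) : Hilb Γ (B.imp A) :=
  .mp (.ax1 A B) h

theorem imp_self : Hilb Γ (A.imp A) :=
  .mp (.mp (.ax2 A (A.imp A) A) (.ax1 A (A.imp A))) (.ax1 A A)

theorem deduction (h : Hilb (insert B Γ) A) : Hilb Γ (B.imp A) := by
  refine h.induction_on_axioms (P := fun A => Hilb Γ (B.imp A)) (fun C hC => ?_)
    (fun _ hC => imp_of_hilb (hC Γ)) fun hBCD hBC => .mp (.mp (.ax2 _ _ _) hBCD) hBC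
  rcases hC with rfl | hC
  exacts [imp_self, imp_of_hilb (.hyp hC)]

/-- Reasoning by cases on `B` and `B → C`, which Peirce's law makes exhaustive. -/
theorem of_imp_of_imp_imp (hB : Hilb Γ (B.imp A)) (hBC : Hilb Γ ((B.imp C).imp A)) :
    Hilb Γ A := by
  have hBC' : Hilb (insert (A.imp .bot) Γ) (B.imp C) := by
    refine deduction (.mp (.ax4 C) (.mp (insert_of_hilb insert_self) ?_))
    exact .mp (insert_of_hilb (insert_of_hilb hB)) insert_self
  exact .mp (.ax3 A .bot) (deduction (.mp (insert_of_hilb hBC) hBC'))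

theorem exists_finite_subset (h : Hilb Γ A) :
    ∃ Γ₀ ⊆ Γ, Γ₀.Finite ∧ Hilb Γ₀ A := by
  refine h.induction_on_axioms (P := fun A => ∃ Γ₀ ⊆ Γ, Γ₀.Finite ∧ Hilb Γ₀ A)
    (fun A hA => ⟨{A}, by simpa, Set.finite_singleton A, .hyp rfl⟩)
    (fun _ hA => ⟨∅, Set.empty_subset Γ, Set.finite_empty, hA ∅⟩) ?_
  rintro A B ⟨Γ₁, hΓ₁, hfin₁, hAB⟩ ⟨Γ₂, hΓ₂, hfin₂, hA⟩
  exact ⟨Γ₁ ∪ Γ₂, Set.union_subset hΓ₁ hΓ₂, hfin₁.union hfin₂,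
    .mp (hAB.mono Set.subset_union_left) (hA.mono Set.subset_union_right)⟩

theorem sound (h : Hilb Γ A) : SemCons Γ A := by
  intro σ hσ
  induction h with
  | hyp hA => exact hσ _ hA
  | @mp A B _ _ ihAB ihA =>
    revert ihAB ihA
    simp only [eval]
    cases eval σ A <;> cases eval σ B <;> decide
  | ax4 A => exact nofun
  | ax11 A | ax15 A =>
    simp only [eval, Fml.iff']
    cases eval σ A <;> decide
  | ax1 A B | ax3 A B | ax5 A B | ax6 A B | ax7 A B | ax8 A B | ax9 A B =>
    simp only [eval]
    cases eval σ A <;> cases eval σ B <;> decide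
  | ax12 A B | ax13 A B | ax14 A B =>
    simp only [eval, Fml.iff']
    cases eval σ A <;> cases eval σ B <;> decide
  | ax2 A B C | ax10 A B C =>
    simp only [eval]
    cases eval σ A <;> cases eval σ B <;> cases eval σ C <;> decide

end Hilb

section Completeness

variable {α : Type} {Γ Δ : Set (Fml α)} {A B C : Fml α}

def MaxUnprovable (A : Fml α) (Δ : Set (Fml α)) : Prop :=
  Maximal (fun Γ => ¬ Hilb Γ A) Δ

theorem exists_maxUnprovable (h : ¬ Hilb Γ A) : ∃ Δ, Γ ⊆ Δ ∧ MaxUnprovable A Δ := by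
  refine zorn_subset_nonempty {Δ | ¬ Hilb Δ A} (fun c hc hchain hne => ?_) Γ h
  refine ⟨⋃₀ c, fun hA => ?_, fun _ => Set.subset_sUnion_of_mem⟩
  obtain ⟨Γ₀, hΓ₀, hfin, hA₀⟩ := hA.exists_finite_subset
  obtain ⟨Δ, hΔc, hΓ₀Δ⟩ :=
    hchain.directedOn.exists_mem_subset_of_finite_of_subset_sUnion hne hfin hΓ₀
  exact hc hΔc (hA₀.mono hΓ₀Δ)

namespace MaxUnprovable

variable (hΔ : MaxUnprovable A Δ)
include hΔ

theorem not_hilb : ¬ Hilb Δ A :=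
  hΔ.prop

theorem imp_of_not_mem (hB : B ∉ Δ) : Hilb Δ (B.imp A) :=
  Hilb.deduction (by_contra fun h => hB (Maximal.mem_of_prop_insert hΔ h))

theorem mem_of_hilb (h : Hilb Δ B) : B ∈ Δ :=
  by_contra fun hB => hΔ.not_hilb (.mp (hΔ.imp_of_not_mem hB) h)

theorem bot_not_mem : Fml.bot ∉ Δ :=
  fun h => hΔ.not_hilb (.mp (.ax4 A) (.hyp h))

theorem mem_iff_of_iff (h : Hilb Δ (Fml.iff' B C)) : B ∈ Δ ↔ C ∈ Δ :=
  ⟨fun hB => hΔ.mem_of_hilb (.mp (.mp (.ax5 _ _) h) (.hyp hB)),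
    fun hC => hΔ.mem_of_hilb (.mp (.mp (.ax6 _ _) h) (.hyp hC))⟩

theorem conj_mem_iff : B.conj C ∈ Δ ↔ B ∈ Δ ∧ C ∈ Δ :=
  ⟨fun h => ⟨hΔ.mem_of_hilb (.mp (.ax5 B C) (.hyp h)), hΔ.mem_of_hilb (.mp (.ax6 B C) (.hyp h))⟩,
    fun ⟨hB, hC⟩ => hΔ.mem_of_hilb (.mp (.mp (.ax7 B C) (.hyp hB)) (.hyp hC))⟩

theorem disj_mem_iff : B.disj C ∈ Δ ↔ B ∈ Δ ∨ C ∈ Δ := by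
  refine ⟨fun h => ?_, ?_⟩
  · by_contra! hBC
    exact hΔ.not_hilb (.mp (.mp (.mp (.ax10 B C A) (hΔ.imp_of_not_mem hBC.1))
      (hΔ.imp_of_not_mem hBC.2)) (.hyp h))
  · rintro (hB | hC)
    exacts [hΔ.mem_of_hilb (.mp (.ax8 B C) (.hyp hB)), hΔ.mem_of_hilb (.mp (.ax9 B C) (.hyp hC))]

theorem imp_mem_iff : B.imp C ∈ Δ ↔ (B ∈ Δ → C ∈ Δ) := by
  refine ⟨fun h hB => hΔ.mem_of_hilb (.mp (.hyp h) (.hyp hB)), fun h => ?_⟩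
  by_contra hBC
  by_cases hB : B ∈ Δ
  · exact hBC (hΔ.mem_of_hilb (Hilb.imp_of_hilb (.hyp (h hB))))
  · exact hΔ.not_hilb (Hilb.of_imp_of_imp_imp (hΔ.imp_of_not_mem hB) (hΔ.imp_of_not_mem hBC))

theorem mem_or_neg_mem (B : Fml α) : B ∈ Δ ∨ B.neg ∈ Δ :=
  hΔ.disj_mem_iff.1 (hΔ.mem_of_hilb (.ax15 B))

end MaxUnprovable

noncomputable def canonVal (Δ : Set (Fml α)) (x : α) : V3 :=
  open Classical in
  if Fml.var x ∉ Δ then .f else if (Fml.var x).neg ∈ Δ then .b else .t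

/-- The truth lemma is proved for `C` and `¬C` simultaneously, since axioms 11–14 push
negations inward. -/
theorem MaxUnprovable.mem_and_neg_mem_iff_eval_ne_f (hΔ : MaxUnprovable A Δ) (C : Fml α) :
    (C ∈ Δ ↔ eval (canonVal Δ) C ≠ .f) ∧ (C.neg ∈ Δ ↔ eval (canonVal Δ) C.neg ≠ .f) := by
  induction C with
  | var x =>
    have := hΔ.mem_or_neg_mem (.var x)
    simp only [eval, canonVal]
    by_cases hx : Fml.var x ∈ Δ <;> by_cases hnx : (Fml.var x).neg ∈ Δ <;> simp_all [negT]
  | bot =>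
    have := (hΔ.mem_or_neg_mem .bot).resolve_left hΔ.bot_not_mem
    exact ⟨iff_of_false hΔ.bot_not_mem (by simp [eval]), iff_of_true this nofun⟩
  | neg B ih =>
    rw [hΔ.mem_iff_of_iff (.ax11 B), ih.1, ih.2]
    simp only [eval]
    cases eval (canonVal Δ) B <;> decide
  | conj B C ihB ihC =>
    rw [hΔ.conj_mem_iff, hΔ.mem_iff_of_iff (.ax13 B C), hΔ.disj_mem_iff, ihB.1, ihB.2, ihC.1,
      ihC.2]
    simp only [eval]
    cases eval (canonVal Δ) B <;> cases eval (canonVal Δ) C <;> decide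
  | disj B C ihB ihC =>
    rw [hΔ.disj_mem_iff, hΔ.mem_iff_of_iff (.ax14 B C), hΔ.conj_mem_iff, ihB.1, ihB.2, ihC.1,
      ihC.2]
    simp only [eval]
    cases eval (canonVal Δ) B <;> cases eval (canonVal Δ) C <;> decide
  | imp B C ihB ihC =>
    rw [hΔ.imp_mem_iff, hΔ.mem_iff_of_iff (.ax12 B C), hΔ.conj_mem_iff, ihB.1, ihC.1, ihC.2]
    simp only [eval]
    cases eval (canonVal Δ) B <;> cases eval (canonVal Δ) C <;> decide

theorem Hilb.complete (h : SemCons Γ A) : Hilb Γ A := by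
  by_contra hA
  obtain ⟨Δ, hΓΔ, hΔ⟩ := exists_maxUnprovable hA
  have hΓ : ∀ C ∈ Γ, eval (canonVal Δ) C ≠ .f :=
    fun C hC => (hΔ.mem_and_neg_mem_iff_eval_ne_f C).1.1 (hΓΔ hC)
  exact hΔ.not_hilb (.hyp ((hΔ.mem_and_neg_mem_iff_eval_ne_f A).1.2 (h _ hΓ)))

end Completeness

/-- Strong soundness and completeness of LP→⊥ : Γ ⊢ A iff Γ ⊨ A. -/
theorem LP_strong_soundness_completeness (Γ : Set (Fml ℕ)) (A : Fml ℕ) :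
    Hilb Γ A ↔ SemCons Γ A :=
  ⟨Hilb.sound, Hilb.complete⟩
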